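/- The map sending a basketball B of order n to the partition of {0,...,4n-1} obtained by merging each quartet {i,j},{k,l} of B into a single block {i,j,k,l} is a bijection from the set of basketballs of order n onto the set of noncrossing partitions of {0,...,4n-1} into n blocks of size 4. -/

import Mathlib

/-!
The inverse map splits every block of a partition into its even and its odd points.
In a noncrossing partition of `{0, …, 4n-1}` into blocks of size 4, the points strictly between
two consecutive points of a block form a union of whole blocks, so consecutive points of a block
differ by an odd number: the parities alternate, and the even pair and the odd pair of each block
cross. Conversely, in a basketball every odd pair is crossed by some even pair, hence, by double
counting, by exactly one; the quartets are therefore well defined and pairwise disjoint, and two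
crossing quartets would yield two crossing pairs of the same matching, or a pair crossed twice.
-/

open scoped Classical

def IsMatchingOn (M : Finset (Finset ℕ)) (S : Finset ℕ) : Prop :=
  (∀ b ∈ M, b.card = 2) ∧
  (∀ b ∈ M, ∀ b' ∈ M, b ≠ b' → Disjoint b b') ∧
  (∀ x, x ∈ S ↔ ∃ b ∈ M, x ∈ b)

def Cross (e o : Finset ℕ) : Prop :=
  (∃ i ∈ e, ∃ k ∈ e, ∃ j ∈ o, ∃ l ∈ o, i < j ∧ j < k ∧ k < l) ∨
  (∃ i ∈ o, ∃ k ∈ o, ∃ j ∈ e, ∃ l ∈ e, i < j ∧ j < k ∧ k < l)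

def IsNCMatchingOn (M : Finset (Finset ℕ)) (S : Finset ℕ) : Prop :=
  IsMatchingOn M S ∧ ∀ b ∈ M, ∀ b' ∈ M, b ≠ b' → ¬ Cross b b'

def En (n : ℕ) : Finset ℕ := (Finset.range (2 * n)).image (fun i => 2 * i)

def On (n : ℕ) : Finset ℕ := (Finset.range (2 * n)).image (fun i => 2 * i + 1)

def IsBasketball (n : ℕ) (Be Bo : Finset (Finset ℕ)) : Prop :=
  IsNCMatchingOn Be (En n) ∧ IsNCMatchingOn Bo (On n) ∧
  ∀ e ∈ Be, (Bo.filter (fun o => Cross e o)).card = 1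

def IsNCPartitionOn (Q : Finset (Finset ℕ)) (S : Finset ℕ) : Prop :=
  (∀ b ∈ Q, b.Nonempty) ∧
  (∀ b ∈ Q, ∀ b' ∈ Q, b ≠ b' → Disjoint b b') ∧
  (∀ x, x ∈ S ↔ ∃ b ∈ Q, x ∈ b) ∧
  (∀ b ∈ Q, ∀ b' ∈ Q, b ≠ b' → ¬ Cross b b')

/-- Merge each even pair with the (unique) odd pair crossing it. -/
noncomputable def mergeQuartets (B : Finset (Finset ℕ) × Finset (Finset ℕ)) :
    Finset (Finset ℕ) :=
  B.1.image (fun e => e ∪ (B.2.filter (fun o => Cross e o)).biUnion id)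

open Finset

theorem Cross.symm {A B : Finset ℕ} (h : Cross A B) : Cross B A := Or.symm h

theorem Cross.mono {A A' B B' : Finset ℕ} (hA : A ⊆ A') (hB : B ⊆ B') (h : Cross A B) :
    Cross A' B' := by
  rcases h with ⟨i, hi, k, hk, j, hj, l, hl, h⟩ | ⟨i, hi, k, hk, j, hj, l, hl, h⟩
  · exact Or.inl ⟨i, hA hi, k, hA hk, j, hB hj, l, hB hl, h⟩
  · exact Or.inr ⟨i, hB hi, k, hB hk, j, hA hj, l, hA hl, h⟩

theorem cross_pair_iff {a c : ℕ} (hac : a < c) (Y : Finset ℕ) :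
    Cross {a, c} Y ↔ (∃ x ∈ Y, a < x ∧ x < c) ∧ (∃ y ∈ Y, y < a ∨ c < y) := by
  constructor
  · rintro (⟨i, hi, k, hk, j, hj, l, hl, h⟩ | ⟨i, hi, k, hk, j, hj, l, hl, h⟩)
    · simp only [mem_insert, mem_singleton] at hi hk
      exact ⟨⟨j, hj, by omega⟩, ⟨l, hl, by omega⟩⟩
    · simp only [mem_insert, mem_singleton] at hj hl
      exact ⟨⟨k, hk, by omega⟩, ⟨i, hi, by omega⟩⟩
  · rintro ⟨⟨x, hx, hxa, hxc⟩, ⟨y, hy, hya | hcy⟩⟩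
    · exact Or.inr ⟨y, hy, x, hx, a, by simp, c, by simp, hya, hxa, hxc⟩
    · exact Or.inl ⟨a, by simp, c, by simp, x, hx, y, hy, hxa, hxc, hcy⟩

theorem inside_or_outside_of_not_cross_pair {a c : ℕ} (hac : a < c) {Y : Finset ℕ}
    (h : ¬ Cross {a, c} Y) :
    (∀ y ∈ Y, y ≤ a ∨ c ≤ y) ∨ (∀ y ∈ Y, a ≤ y ∧ y ≤ c) := by
  by_cases hin : ∃ x ∈ Y, a < x ∧ x < c
  · refine Or.inr fun y hy => ?_
    by_contra
    exact h ((cross_pair_iff hac Y).2 ⟨hin, y, hy, by omega⟩)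
  · refine Or.inl fun y hy => ?_
    by_contra
    exact hin ⟨y, hy, by omega⟩

theorem subset_Ioo_of_not_cross_pair {u v : ℕ} (huv : u < v) {b : Finset ℕ}
    (h : ¬ Cross {u, v} b) (hu : u ∉ b) (hv : v ∉ b) {x : ℕ} (hx : x ∈ b)
    (hxI : x ∈ Ioo u v) : b ⊆ Ioo u v := by
  rw [mem_Ioo] at hxI
  rcases inside_or_outside_of_not_cross_pair huv h with hout | hin
  · have := hout x hx
    omega
  · intro y hy
    have hy' := hin y hy
    have hyu : u ≠ y := by rintro rfl; exact hu hy
    have hyv : y ≠ v := by rintro rfl; exact hv hy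
    exact mem_Ioo.2 ⟨hy'.1.lt_of_ne hyu, hy'.2.lt_of_ne hyv⟩

theorem lt_lt_lt_of_cross_pair {a c b d : ℕ} (hac : a < c) (hbd : b < d)
    (h : Cross {a, c} {b, d}) : (a < b ∧ b < c ∧ c < d) ∨ (b < a ∧ a < d ∧ d < c) := by
  obtain ⟨⟨x, hx, hx'⟩, ⟨y, hy, hy'⟩⟩ := (cross_pair_iff hac _).1 h
  simp only [mem_insert, mem_singleton] at hx hy
  omega

theorem Cross.pair_or_pair_of_quartet {a b c d : ℕ} (hab : a < b) (hbc : b < c) (hcd : c < d)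
    {Y : Finset ℕ} (hY : Disjoint {a, b, c, d} Y) (h : Cross {a, b, c, d} Y) :
    Cross {a, c} Y ∨ Cross {b, d} Y := by
  have hY' : ∀ y ∈ Y, y ≠ a ∧ y ≠ b ∧ y ≠ c ∧ y ≠ d := fun y hy => by
    simpa using disjoint_right.1 hY hy
  by_contra! hno
  -- `Y` then lies in a single gap of `a < b < c < d`, which a crossing would have to leave
  have P := inside_or_outside_of_not_cross_pair (hab.trans hbc) hno.1
  have Q := inside_or_outside_of_not_cross_pair (hbc.trans hcd) hno.2
  rcases h with ⟨i, hi, k, hk, j, hj, l, hl, h⟩ | ⟨i, hi, k, hk, j, hj, l, hl, h⟩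
  · simp only [mem_insert, mem_singleton] at hi hk
    have := hY' j hj; have := hY' l hl
    rcases P with P | P <;> rcases Q with Q | Q <;>
      have := P j hj <;> have := P l hl <;> have := Q j hj <;> have := Q l hl <;> omega
  · simp only [mem_insert, mem_singleton] at hj hl
    have := hY' i hi; have := hY' k hk
    rcases P with P | P <;> rcases Q with Q | Q <;>
      have := P i hi <;> have := P k hk <;> have := Q i hi <;> have := Q k hk <;> omega

theorem exists_lt_of_card_eq_two {b : Finset ℕ} (hb : b.card = 2) :
    ∃ x y, x < y ∧ b = {x, y} := by
  obtain ⟨x, y, hxy, rfl⟩ := card_eq_two.1 hb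
  rcases hxy.lt_or_gt with h | h
  · exact ⟨x, y, h, rfl⟩
  · exact ⟨y, x, h, pair_comm x y⟩

theorem exists_lt_lt_lt_of_card_eq_four {q : Finset ℕ} (hq : q.card = 4) :
    ∃ a b c d, a < b ∧ b < c ∧ c < d ∧ q = {a, b, c, d} := by
  set f := q.orderEmbOfFin hq
  refine ⟨f 0, f 1, f 2, f 3, f.strictMono (by decide), f.strictMono (by decide),
    f.strictMono (by decide), ?_⟩
  ext x
  have hx : x ∈ q ↔ ∃ i, f i = x := by rw [← mem_coe, ← range_orderEmbOfFin q hq]; rfl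
  simp only [hx, mem_insert, mem_singleton]
  constructor
  · rintro ⟨i, rfl⟩
    fin_cases i <;> simp
  · rintro (rfl | rfl | rfl | rfl) <;> exact ⟨_, rfl⟩

theorem cross_or_cross_of_cross_union {e o Y : Finset ℕ} (he : e.card = 2) (ho : o.card = 2)
    (heo : Cross e o) (hY : Disjoint (e ∪ o) Y) (h : Cross (e ∪ o) Y) :
    Cross e Y ∨ Cross o Y := by
  obtain ⟨a, c, hac, rfl⟩ := exists_lt_of_card_eq_two he
  obtain ⟨b, d, hbd, rfl⟩ := exists_lt_of_card_eq_two ho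
  rcases lt_lt_lt_of_cross_pair hac hbd heo with ⟨h1, h2, h3⟩ | ⟨h1, h2, h3⟩
  · have hun : ({a, c} ∪ {b, d} : Finset ℕ) = {a, b, c, d} := by
      ext; simp only [mem_union, mem_insert, mem_singleton]; tauto
    rw [hun] at hY h
    exact h.pair_or_pair_of_quartet h1 h2 h3 hY
  · have hun : ({a, c} ∪ {b, d} : Finset ℕ) = {b, a, d, c} := by
      ext; simp only [mem_union, mem_insert, mem_singleton]; tauto
    rw [hun] at hY h
    exact (h.pair_or_pair_of_quartet h1 h2 h3 hY).symm

theorem card_eq_mul_card_of_cover {α : Type*} [DecidableEq α] {M : Finset (Finset α)}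
    {T : Finset α} {k : ℕ} (hk : ∀ b ∈ M, b.card = k)
    (hdisj : ∀ b ∈ M, ∀ b' ∈ M, b ≠ b' → Disjoint b b')
    (hT : ∀ x, x ∈ T ↔ ∃ b ∈ M, x ∈ b) : T.card = k * M.card := by
  have hT' : T = M.biUnion id := by ext x; simp [hT]
  rw [hT', card_biUnion (t := id) hdisj,
    sum_congr (f := fun b => #(id b)) (g := fun _ => k) rfl hk, sum_const, smul_eq_mul, mul_comm]

theorem dvd_card_of_closed {α : Type*} [DecidableEq α] {M : Finset (Finset α)}
    {T : Finset α} {k : ℕ} (hk : ∀ b ∈ M, b.card = k)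
    (hdisj : ∀ b ∈ M, ∀ b' ∈ M, b ≠ b' → Disjoint b b')
    (hT : ∀ x ∈ T, ∃ b ∈ M, x ∈ b)
    (hclosed : ∀ b ∈ M, ∀ x ∈ b, x ∈ T → b ⊆ T) : k ∣ T.card := by
  refine ⟨_, card_eq_mul_card_of_cover (M := M.filter (· ⊆ T))
    (fun b hb => hk b (mem_filter.1 hb).1)
    (fun b hb b' hb' => hdisj b (mem_filter.1 hb).1 b' (mem_filter.1 hb').1) fun x => ?_⟩
  simp only [mem_filter]
  constructor
  · intro hx
    obtain ⟨b, hb, hxb⟩ := hT x hx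
    exact ⟨b, ⟨hb, hclosed b hb x hxb hx⟩, hxb⟩
  · rintro ⟨b, ⟨-, hbT⟩, hxb⟩
    exact hbT hxb

theorem mem_En {n x : ℕ} : x ∈ En n ↔ x % 2 = 0 ∧ x < 4 * n := by
  simp only [En, mem_image, mem_range]
  constructor
  · rintro ⟨i, hi, rfl⟩; omega
  · rintro ⟨h1, h2⟩; exact ⟨x / 2, by omega, by omega⟩

theorem mem_On {n x : ℕ} : x ∈ On n ↔ x % 2 = 1 ∧ x < 4 * n := by
  simp only [On, mem_image, mem_range]
  constructor
  · rintro ⟨i, hi, rfl⟩; omega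
  · rintro ⟨h1, h2⟩; exact ⟨x / 2, by omega, by omega⟩

theorem card_En (n : ℕ) : (En n).card = 2 * n := by
  rw [En, card_image_of_injective _ fun x y h => by omega, card_range]

theorem card_On (n : ℕ) : (On n).card = 2 * n := by
  rw [On, card_image_of_injective _ fun x y h => by omega, card_range]

theorem En_eq_filter (n : ℕ) : En n = (range (4 * n)).filter (· % 2 = 0) := by
  ext x; simp [mem_En, and_comm]

theorem On_eq_filter (n : ℕ) : On n = (range (4 * n)).filter (· % 2 = 1) := by
  ext x; simp [mem_On, and_comm]

def evenPart (q : Finset ℕ) : Finset ℕ := q.filter (· % 2 = 0)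

def oddPart (q : Finset ℕ) : Finset ℕ := q.filter (· % 2 = 1)

theorem evenPart_union_oddPart (q : Finset ℕ) : evenPart q ∪ oddPart q = q := by
  ext x
  simp only [evenPart, oddPart, ← filter_or, mem_filter, and_iff_left_iff_imp]
  omega

theorem IsMatchingOn.card_eq {M : Finset (Finset ℕ)} {S : Finset ℕ} (hM : IsMatchingOn M S) :
    S.card = 2 * M.card :=
  card_eq_mul_card_of_cover hM.1 hM.2.1 hM.2.2

namespace IsBasketball

variable {n : ℕ} {Be Bo : Finset (Finset ℕ)} {e e' o o' : Finset ℕ}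

theorem even_of_mem (hB : IsBasketball n Be Bo) (he : e ∈ Be) {x : ℕ} (hx : x ∈ e) :
    x % 2 = 0 ∧ x < 4 * n :=
  mem_En.1 ((hB.1.1.2.2 x).2 ⟨e, he, hx⟩)

theorem odd_of_mem (hB : IsBasketball n Be Bo) (ho : o ∈ Bo) {x : ℕ} (hx : x ∈ o) :
    x % 2 = 1 ∧ x < 4 * n :=
  mem_On.1 ((hB.2.1.1.2.2 x).2 ⟨o, ho, hx⟩)

theorem disjoint_of_mem (hB : IsBasketball n Be Bo) (he : e ∈ Be) (ho : o ∈ Bo) :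
    Disjoint e o :=
  disjoint_left.2 fun _ hx hx' => by
    have := hB.even_of_mem he hx
    have := hB.odd_of_mem ho hx'
    omega

theorem card_even (hB : IsBasketball n Be Bo) : Be.card = n := by
  have := hB.1.1.card_eq
  rw [card_En] at this
  omega

theorem card_odd (hB : IsBasketball n Be Bo) : Bo.card = n := by
  have := hB.2.1.1.card_eq
  rw [card_On] at this
  omega

/-- If no even pair crossed the odd pair `{j, l}`, the even points strictly between `j` and `l`
would be matched among themselves, and so would the odd ones; but there is an odd number of such
points. -/
theorem exists_cross (hB : IsBasketball n Be Bo) (ho : o ∈ Bo) : ∃ e ∈ Be, Cross e o := by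
  obtain ⟨j, l, hjl, rfl⟩ := exists_lt_of_card_eq_two (hB.2.1.1.1 _ ho)
  have hj := hB.odd_of_mem ho (mem_insert_self j {l})
  have hl := hB.odd_of_mem ho (mem_insert_of_mem (mem_singleton_self l))
  by_contra! hno
  have hEven : 2 ∣ ((Ioo j l).filter (· % 2 = 0)).card := by
    refine dvd_card_of_closed hB.1.1.1 hB.1.1.2.1 (fun x hx => ?_) fun e he x hxe hx => ?_
    · simp only [mem_filter, mem_Ioo] at hx
      exact (hB.1.1.2.2 x).1 (mem_En.2 ⟨hx.2, by omega⟩)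
    · have hje : j ∉ e := fun h => by have := hB.even_of_mem he h; omega
      have hle : l ∉ e := fun h => by have := hB.even_of_mem he h; omega
      have hsub := subset_Ioo_of_not_cross_pair hjl (fun h => hno e he h.symm) hje hle hxe
        (mem_filter.1 hx).1
      exact fun y hy => mem_filter.2 ⟨hsub hy, (hB.even_of_mem he hy).1⟩
  have hOdd : 2 ∣ ((Ioo j l).filter (¬ · % 2 = 0)).card := by
    refine dvd_card_of_closed hB.2.1.1.1 hB.2.1.1.2.1 (fun x hx => ?_) fun o' ho' x hxo' hx => ?_
    · simp only [mem_filter, mem_Ioo] at hx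
      exact (hB.2.1.1.2.2 x).1 (mem_On.2 ⟨by omega, by omega⟩)
    · have hxI := (mem_filter.1 hx).1
      have hne : {j, l} ≠ o' := by
        rintro rfl
        simp only [mem_Ioo, mem_insert, mem_singleton] at hxI hxo'
        omega
      have hdisj := hB.2.1.1.2.1 _ ho o' ho' hne
      have hsub := subset_Ioo_of_not_cross_pair hjl (hB.2.1.2 _ ho o' ho' hne)
        (disjoint_left.1 hdisj (mem_insert_self j {l}))
        (disjoint_left.1 hdisj (mem_insert_of_mem (mem_singleton_self l))) hxo' hxI
      exact fun y hy => mem_filter.2 ⟨hsub hy, by have := hB.odd_of_mem ho' hy; omega⟩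
  have hsplit := card_filter_add_card_filter_not (s := Ioo j l) (· % 2 = 0)
  rw [Nat.card_Ioo] at hsplit
  omega

theorem card_filter_cross_odd (hB : IsBasketball n Be Bo) (ho : o ∈ Bo) :
    (Be.filter (Cross · o)).card = 1 := by
  have hsum : ∑ o ∈ Bo, 1 = ∑ o ∈ Bo, (Be.filter (Cross · o)).card :=
    calc ∑ o ∈ Bo, 1 = ∑ e ∈ Be, 1 := by simp [hB.card_even, hB.card_odd]
      _ = ∑ e ∈ Be, (Bo.filter (Cross e ·)).card := (sum_congr rfl hB.2.2).symm
      _ = _ := sum_card_bipartiteAbove_eq_sum_card_bipartiteBelow Cross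
  have hpos : ∀ o ∈ Bo, 1 ≤ (Be.filter (Cross · o)).card := fun o ho => by
    obtain ⟨e, he, hc⟩ := hB.exists_cross ho
    exact card_pos.2 ⟨e, mem_filter.2 ⟨he, hc⟩⟩
  exact ((sum_eq_sum_iff_of_le hpos).1 hsum o ho).symm

theorem eq_of_cross_of_cross_left (hB : IsBasketball n Be Bo) (he : e ∈ Be) (he' : e' ∈ Be)
    (ho : o ∈ Bo) (h : Cross e o) (h' : Cross e' o) : e = e' :=
  card_le_one.1 (hB.card_filter_cross_odd ho).le e (mem_filter.2 ⟨he, h⟩) e'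
    (mem_filter.2 ⟨he', h'⟩)

theorem eq_of_cross_of_cross_right (hB : IsBasketball n Be Bo) (he : e ∈ Be) (ho : o ∈ Bo)
    (ho' : o' ∈ Bo) (h : Cross e o) (h' : Cross e o') : o = o' :=
  card_le_one.1 (hB.2.2 e he).le o (mem_filter.2 ⟨ho, h⟩) o' (mem_filter.2 ⟨ho', h'⟩)

theorem filter_cross_eq_singleton (hB : IsBasketball n Be Bo) (he : e ∈ Be) :
    ∃ o ∈ Bo, Cross e o ∧ Bo.filter (Cross e ·) = {o} := by
  obtain ⟨o, ho⟩ := card_eq_one.1 (hB.2.2 e he)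
  obtain ⟨hoB, hc⟩ := mem_filter.1 (ho ▸ mem_singleton_self o)
  exact ⟨o, hoB, hc, ho⟩

theorem mem_mergeQuartets (hB : IsBasketball n Be Bo) {b : Finset ℕ} :
    b ∈ mergeQuartets (Be, Bo) ↔ ∃ e ∈ Be, ∃ o ∈ Bo, Cross e o ∧ e ∪ o = b := by
  simp only [mergeQuartets, mem_image]
  constructor
  · rintro ⟨e, he, rfl⟩
    obtain ⟨o, ho, hc, hfilter⟩ := hB.filter_cross_eq_singleton he
    exact ⟨e, he, o, ho, hc, by rw [hfilter, singleton_biUnion, id]⟩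
  · rintro ⟨e, he, o, ho, hc, rfl⟩
    obtain ⟨o', ho', hc', hfilter⟩ := hB.filter_cross_eq_singleton he
    obtain rfl := hB.eq_of_cross_of_cross_right he ho ho' hc hc'
    exact ⟨e, he, by rw [hfilter, singleton_biUnion, id]⟩

theorem evenPart_union (hB : IsBasketball n Be Bo) (he : e ∈ Be) (ho : o ∈ Bo) :
    evenPart (e ∪ o) = e := by
  rw [evenPart, filter_union, filter_true_of_mem fun x hx => (hB.even_of_mem he hx).1,
    filter_false_of_mem fun x hx => by have := hB.odd_of_mem ho hx; omega, union_empty]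

theorem oddPart_union (hB : IsBasketball n Be Bo) (he : e ∈ Be) (ho : o ∈ Bo) :
    oddPart (e ∪ o) = o := by
  rw [oddPart, filter_union, filter_true_of_mem fun x hx => (hB.odd_of_mem ho hx).1,
    filter_false_of_mem fun x hx => by have := hB.even_of_mem he hx; omega, empty_union]

theorem ne_ne_of_union_ne (hB : IsBasketball n Be Bo) (he : e ∈ Be) (he' : e' ∈ Be)
    (ho : o ∈ Bo) (ho' : o' ∈ Bo) (hc : Cross e o) (hc' : Cross e' o')
    (hne : e ∪ o ≠ e' ∪ o') : e ≠ e' ∧ o ≠ o' := by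
  constructor
  · rintro rfl
    exact hne (by rw [hB.eq_of_cross_of_cross_right he ho ho' hc hc'])
  · rintro rfl
    exact hne (by rw [hB.eq_of_cross_of_cross_left he he' ho hc hc'])

theorem disjoint_union (hB : IsBasketball n Be Bo) (he : e ∈ Be) (he' : e' ∈ Be)
    (ho : o ∈ Bo) (ho' : o' ∈ Bo) (hee' : e ≠ e') (hoo' : o ≠ o') :
    Disjoint (e ∪ o) (e' ∪ o') := by
  rw [disjoint_union_left, disjoint_union_right, disjoint_union_right]
  exact ⟨⟨hB.1.1.2.1 e he e' he' hee', hB.disjoint_of_mem he ho'⟩,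
    (hB.disjoint_of_mem he' ho).symm, hB.2.1.1.2.1 o ho o' ho' hoo'⟩

theorem not_cross_union (hB : IsBasketball n Be Bo) (he : e ∈ Be) (he' : e' ∈ Be)
    (ho : o ∈ Bo) (ho' : o' ∈ Bo) (hc : Cross e o) (hc' : Cross e' o') (hee' : e ≠ e')
    (hoo' : o ≠ o') : ¬ Cross (e ∪ o) (e' ∪ o') := by
  have hdisj := hB.disjoint_union he he' ho ho' hee' hoo'
  have hsplit := cross_or_cross_of_cross_union (hB.1.1.1 _ he) (hB.2.1.1.1 _ ho) hc hdisj
  have hsplit' : ∀ {Y}, Disjoint (e' ∪ o') Y → Cross (e' ∪ o') Y →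
      Cross e' Y ∨ Cross o' Y :=
    cross_or_cross_of_cross_union (hB.1.1.1 _ he') (hB.2.1.1.1 _ ho') hc'
  intro h
  rcases hsplit h with h | h
  · rcases hsplit' (hdisj.symm.mono_right subset_union_left) h.symm with h | h
    · exact hB.1.2 e' he' e he hee'.symm h
    · exact hoo' (hB.eq_of_cross_of_cross_right he ho ho' hc h.symm)
  · rcases hsplit' (hdisj.symm.mono_right subset_union_right) h.symm with h | h
    · exact hee' (hB.eq_of_cross_of_cross_left he he' ho hc h)
    · exact hB.2.1.2 o' ho' o ho hoo'.symm h

theorem card_of_mem_mergeQuartets (hB : IsBasketball n Be Bo) {b : Finset ℕ}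
    (hb : b ∈ mergeQuartets (Be, Bo)) : b.card = 4 := by
  obtain ⟨e, he, o, ho, -, rfl⟩ := hB.mem_mergeQuartets.1 hb
  rw [card_union_of_disjoint (hB.disjoint_of_mem he ho), hB.1.1.1 e he, hB.2.1.1.1 o ho]

theorem isNCPartitionOn_mergeQuartets (hB : IsBasketball n Be Bo) :
    IsNCPartitionOn (mergeQuartets (Be, Bo)) (range (4 * n)) := by
  refine ⟨fun b hb => card_pos.1 (by rw [hB.card_of_mem_mergeQuartets hb]; omega),
    fun b hb b' hb' hne => ?_, fun x => ?_, fun b hb b' hb' hne => ?_⟩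
  · obtain ⟨e, he, o, ho, hc, rfl⟩ := hB.mem_mergeQuartets.1 hb
    obtain ⟨e', he', o', ho', hc', rfl⟩ := hB.mem_mergeQuartets.1 hb'
    obtain ⟨hee', hoo'⟩ := hB.ne_ne_of_union_ne he he' ho ho' hc hc' hne
    exact hB.disjoint_union he he' ho ho' hee' hoo'
  · rw [mem_range]
    constructor
    · intro hx
      rcases Nat.mod_two_eq_zero_or_one x with hpar | hpar
      · obtain ⟨e, he, hxe⟩ := (hB.1.1.2.2 x).1 (mem_En.2 ⟨hpar, hx⟩)
        obtain ⟨o, ho, hc, -⟩ := hB.filter_cross_eq_singleton he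
        exact ⟨e ∪ o, hB.mem_mergeQuartets.2 ⟨e, he, o, ho, hc, rfl⟩,
          mem_union_left _ hxe⟩
      · obtain ⟨o, ho, hxo⟩ := (hB.2.1.1.2.2 x).1 (mem_On.2 ⟨hpar, hx⟩)
        obtain ⟨e, he, hc⟩ := hB.exists_cross ho
        exact ⟨e ∪ o, hB.mem_mergeQuartets.2 ⟨e, he, o, ho, hc, rfl⟩,
          mem_union_right _ hxo⟩
    · rintro ⟨b, hb, hxb⟩
      obtain ⟨e, he, o, ho, -, rfl⟩ := hB.mem_mergeQuartets.1 hb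
      rcases mem_union.1 hxb with hx | hx
      · exact (hB.even_of_mem he hx).2
      · exact (hB.odd_of_mem ho hx).2
  · obtain ⟨e, he, o, ho, hc, rfl⟩ := hB.mem_mergeQuartets.1 hb
    obtain ⟨e', he', o', ho', hc', rfl⟩ := hB.mem_mergeQuartets.1 hb'
    obtain ⟨hee', hoo'⟩ := hB.ne_ne_of_union_ne he he' ho ho' hc hc' hne
    exact hB.not_cross_union he he' ho ho' hc hc' hee' hoo'

theorem card_mergeQuartets (hB : IsBasketball n Be Bo) :
    (mergeQuartets (Be, Bo)).card = n := by
  have hQ := hB.isNCPartitionOn_mergeQuartets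
  have := card_eq_mul_card_of_cover (fun b => hB.card_of_mem_mergeQuartets) hQ.2.1 hQ.2.2.1
  rw [card_range] at this
  omega

theorem image_evenPart_mergeQuartets (hB : IsBasketball n Be Bo) :
    (mergeQuartets (Be, Bo)).image evenPart = Be := by
  ext e
  simp only [mem_image, hB.mem_mergeQuartets]
  constructor
  · rintro ⟨_, ⟨e, he, o, ho, -, rfl⟩, rfl⟩
    rwa [hB.evenPart_union he ho]
  · intro he
    obtain ⟨o, ho, hc, -⟩ := hB.filter_cross_eq_singleton he
    exact ⟨e ∪ o, ⟨e, he, o, ho, hc, rfl⟩, hB.evenPart_union he ho⟩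

theorem image_oddPart_mergeQuartets (hB : IsBasketball n Be Bo) :
    (mergeQuartets (Be, Bo)).image oddPart = Bo := by
  ext o
  simp only [mem_image, hB.mem_mergeQuartets]
  constructor
  · rintro ⟨_, ⟨e, he, o, ho, -, rfl⟩, rfl⟩
    rwa [hB.oddPart_union he ho]
  · intro ho
    obtain ⟨e, he, hc⟩ := hB.exists_cross ho
    exact ⟨e ∪ o, ⟨e, he, o, ho, hc, rfl⟩, hB.oddPart_union he ho⟩

end IsBasketball

namespace IsNCPartitionOn

variable {Q : Finset (Finset ℕ)}

theorem dvd_gap {m k : ℕ} (hQ : IsNCPartitionOn Q (range m)) (hQk : ∀ b ∈ Q, b.card = k)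
    {q : Finset ℕ} (hq : q ∈ Q) {u v : ℕ} (hu : u ∈ q) (hv : v ∈ q) (huv : u < v)
    (hgap : ∀ w ∈ q, w ∉ Ioo u v) : k ∣ v - u - 1 := by
  have hvm : v < m := mem_range.1 ((hQ.2.2.1 v).2 ⟨q, hq, hv⟩)
  rw [← Nat.card_Ioo]
  refine dvd_card_of_closed hQk hQ.2.1 (fun x hx => ?_) fun q' hq' x hxq' hx => ?_
  · exact (hQ.2.2.1 x).1 (mem_range.2 (by rw [mem_Ioo] at hx; omega))
  · have hne : q ≠ q' := by rintro rfl; exact hgap x hxq' hx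
    have hdisj := hQ.2.1 q hq q' hq' hne
    exact subset_Ioo_of_not_cross_pair huv
      (fun h => hQ.2.2.2 q hq q' hq' hne (h.mono (insert_subset hu (singleton_subset_iff.2 hv))
        subset_rfl))
      (disjoint_left.1 hdisj hu) (disjoint_left.1 hdisj hv) hxq' hx

variable {n : ℕ}

theorem evenPart_cross_oddPart (hQ : IsNCPartitionOn Q (range (4 * n)))
    (hQ4 : ∀ b ∈ Q, b.card = 4) {q : Finset ℕ} (hq : q ∈ Q) :
    (evenPart q).card = 2 ∧ (oddPart q).card = 2 ∧ Cross (evenPart q) (oddPart q) := by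
  have odd_gap {u v : ℕ} (hu : u ∈ q) (hv : v ∈ q) (huv : u < v)
      (hgap : ∀ w ∈ q, w ∉ Ioo u v) : (v - u) % 2 = 1 := by
    have := hQ.dvd_gap hQ4 hq hu hv huv hgap
    omega
  obtain ⟨a, b, c, d, hab, hbc, hcd, rfl⟩ := exists_lt_lt_lt_of_card_eq_four (hQ4 q hq)
  have hab' := odd_gap (by simp) (by simp) hab (by simp; omega)
  have hbc' := odd_gap (by simp) (by simp) hbc (by simp; omega)
  have hcd' := odd_gap (by simp) (by simp) hcd (by simp; omega)
  rcases Nat.mod_two_eq_zero_or_one a with ha | ha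
  · have hE : evenPart {a, b, c, d} = {a, c} := by
      ext x; simp only [evenPart, mem_filter, mem_insert, mem_singleton]; omega
    have hO : oddPart {a, b, c, d} = {b, d} := by
      ext x; simp only [oddPart, mem_filter, mem_insert, mem_singleton]; omega
    rw [hE, hO]
    exact ⟨card_pair (by omega), card_pair (by omega),
      Or.inl ⟨a, by simp, c, by simp, b, by simp, d, by simp, hab, hbc, hcd⟩⟩
  · have hE : evenPart {a, b, c, d} = {b, d} := by
      ext x; simp only [evenPart, mem_filter, mem_insert, mem_singleton]; omega
    have hO : oddPart {a, b, c, d} = {a, c} := by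
      ext x; simp only [oddPart, mem_filter, mem_insert, mem_singleton]; omega
    rw [hE, hO]
    exact ⟨card_pair (by omega), card_pair (by omega),
      Or.inr ⟨a, by simp, c, by simp, b, by simp, d, by simp, hab, hbc, hcd⟩⟩

theorem isNCMatchingOn_image_filter {S : Finset ℕ} (hQ : IsNCPartitionOn Q S) (p : ℕ → Prop)
    [DecidablePred p] (h2 : ∀ q ∈ Q, (q.filter p).card = 2) :
    IsNCMatchingOn (Q.image (·.filter p)) (S.filter p) := by
  refine ⟨⟨forall_mem_image.2 h2, ?_, fun x => ?_⟩, ?_⟩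
  · simp only [forall_mem_image]
    intro q hq q' hq' hne
    exact (hQ.2.1 q hq q' hq' (ne_of_apply_ne _ hne)).mono (filter_subset _ _) (filter_subset _ _)
  · simp only [mem_filter, exists_mem_image, hQ.2.2.1 x, ← and_assoc, exists_and_right]
  · simp only [forall_mem_image]
    intro q hq q' hq' hne h
    exact hQ.2.2.2 q hq q' hq' (ne_of_apply_ne _ hne)
      (h.mono (filter_subset _ _) (filter_subset _ _))

theorem filter_cross_evenPart (hQ : IsNCPartitionOn Q (range (4 * n)))
    (hQ4 : ∀ b ∈ Q, b.card = 4) {q : Finset ℕ} (hq : q ∈ Q) :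
    (Q.image oddPart).filter (Cross (evenPart q) ·) = {oddPart q} := by
  ext o
  simp only [mem_filter, mem_image, mem_singleton]
  constructor
  · rintro ⟨⟨q', hq', rfl⟩, hc⟩
    by_contra hne
    exact hQ.2.2.2 q hq q' hq' (ne_of_apply_ne _ (Ne.symm hne))
      (hc.mono (filter_subset _ _) (filter_subset _ _))
  · rintro rfl
    exact ⟨⟨q, hq, rfl⟩, (hQ.evenPart_cross_oddPart hQ4 hq).2.2⟩

theorem isBasketball_image (hQ : IsNCPartitionOn Q (range (4 * n)))
    (hQ4 : ∀ b ∈ Q, b.card = 4) : IsBasketball n (Q.image evenPart) (Q.image oddPart) := by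
  refine ⟨?_, ?_, forall_mem_image.2 fun q hq => ?_⟩
  · rw [En_eq_filter]
    exact hQ.isNCMatchingOn_image_filter _ fun q hq => (hQ.evenPart_cross_oddPart hQ4 hq).1
  · rw [On_eq_filter]
    exact hQ.isNCMatchingOn_image_filter _ fun q hq => (hQ.evenPart_cross_oddPart hQ4 hq).2.1
  · rw [hQ.filter_cross_evenPart hQ4 hq, card_singleton]

theorem mergeQuartets_image (hQ : IsNCPartitionOn Q (range (4 * n)))
    (hQ4 : ∀ b ∈ Q, b.card = 4) : mergeQuartets (Q.image evenPart, Q.image oddPart) = Q := by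
  rw [mergeQuartets, image_image]
  conv_rhs => rw [← image_id (s := Q)]
  refine image_congr fun q hq => ?_
  simp only [Function.comp_apply, hQ.filter_cross_evenPart hQ4 hq, singleton_biUnion, id]
  exact evenPart_union_oddPart q

end IsNCPartitionOn

theorem stmt_6 (n : ℕ) :
    Set.BijOn mergeQuartets
      {B : Finset (Finset ℕ) × Finset (Finset ℕ) | IsBasketball n B.1 B.2}
      {Q : Finset (Finset ℕ) |
        IsNCPartitionOn Q (Finset.range (4 * n)) ∧ Q.card = n ∧
        ∀ b ∈ Q, b.card = 4} := by
  refine Set.InvOn.bijOn (f' := fun Q => (Q.image evenPart, Q.image oddPart)) ⟨?_, ?_⟩ ?_ ?_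
  · intro B hB
    exact Prod.ext hB.image_evenPart_mergeQuartets hB.image_oddPart_mergeQuartets
  · rintro Q ⟨hQ, -, hQ4⟩
    exact hQ.mergeQuartets_image hQ4
  · intro B hB
    exact ⟨hB.isNCPartitionOn_mergeQuartets, hB.card_mergeQuartets,
      fun b => hB.card_of_mem_mergeQuartets⟩
  · rintro Q ⟨hQ, -, hQ4⟩
    exact hQ.isBasketball_image hQ4
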